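/- Let H = C^d with d ≥ 3 and orthonormal basis {e_i}_{i=1}^d. With S the swap operator on H⊗H, define for μ1,...,μ6 ∈ C (μ_i real for i=1,2,5,6 and μ4 = conj(μ3)) the operator Ω = μ1(I⊗e1e1*) + μ2(e1e1*⊗I) + μ3 S(I⊗e1e1*) + μ4 S(e1e1*⊗I) + μ5(I⊗I) + μ6 S. Then Ω ≥ 0 if and only if Σ_{i=1}^6 μ_i ≥ 0, the 2×2 matrix [[μ1+μ5, conj(μ3)+μ6],[μ3+μ6, μ2+μ5]] is positive semidefinite, and μ5 ≥ |μ6|. -/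

import Mathlib

open Matrix Kronecker ComplexOrder

/-- The swap operator on `H ⊗ H`, as a matrix: `S (x ⊗ y) = y ⊗ x`. -/
def swap (n : Type*) [DecidableEq n] : Matrix (n × n) (n × n) ℂ :=
  Matrix.of fun p q => if p.1 = q.2 ∧ p.2 = q.1 then (1 : ℂ) else 0

set_option linter.unusedSectionVars false
set_option maxHeartbeats 1000000

variable {n : Type*} [Fintype n] [DecidableEq n]

lemma swap_apply (p q : n × n) : swap n p q = if q = (p.2, p.1) then (1:ℂ) else 0 := by
  simp [_root_.swap, Prod.ext_iff, and_comm, eq_comm]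

lemma swap_mul_apply (M : Matrix (n × n) (n × n) ℂ) (p q : n × n) :
    (swap n * M) p q = M (p.2, p.1) q := by
  rw [mul_apply]
  rw [Finset.sum_eq_single (p.2, p.1)]
  · simp [swap_apply]
  · intro b _ hb
    have : ¬ (b = (p.2, p.1)) := hb
    simp [swap_apply, this]
  · simp

lemma mul_swap_apply (M : Matrix (n × n) (n × n) ℂ) (p q : n × n) :
    (M * swap n) p q = M p (q.2, q.1) := by
  rw [mul_apply]
  rw [Finset.sum_eq_single (q.2, q.1)]
  · simp [swap_apply]
  · intro b _ hb
    have : ¬ (q = (b.2, b.1)) := by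
      rintro rfl; exact hb rfl
    simp [swap_apply, this]
  · simp

lemma swap_conjTranspose : (swap n)ᴴ = swap n := by
  ext p q
  simp only [conjTranspose_apply, swap_apply]
  split <;> split <;> simp_all [Prod.ext_iff] <;> tauto

lemma swap_mul_swap : swap n * swap n = 1 := by
  ext p q
  rw [swap_mul_apply]
  simp [swap_apply, one_apply, Prod.ext_iff, and_comm, eq_comm]

lemma swap_mul_kron (A B : Matrix n n ℂ) : swap n * (A ⊗ₖ B) = (B ⊗ₖ A) * swap n := by
  ext p q
  rw [swap_mul_apply, mul_swap_apply]
  simp [Matrix.kroneckerMap_apply, mul_comm]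

set_option linter.unusedSectionVars false

/-- elementary tensor of two vectors -/
def kv (x y : n → ℂ) : n × n → ℂ := fun p => x p.1 * y p.2

lemma swap_mulVec (z : n × n → ℂ) (p : n × n) : (swap n *ᵥ z) p = z (p.2, p.1) := by
  rw [mulVec, dotProduct]
  rw [Finset.sum_eq_single (p.2, p.1)]
  · simp [swap_apply]
  · intro b _ hb
    have : ¬ (b = (p.2, p.1)) := hb
    simp [swap_apply, this]
  · simp

lemma swap_mulVec_kv (x y : n → ℂ) : swap n *ᵥ kv x y = kv y x := by
  funext p; rw [_root_.swap_mulVec]; simp [kv, mul_comm]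

lemma kron_mulVec_kv (A B : Matrix n n ℂ) (x y : n → ℂ) :
    (A ⊗ₖ B) *ᵥ kv x y = kv (A *ᵥ x) (B *ᵥ y) := by
  funext p
  rw [mulVec, dotProduct]
  rw [Fintype.sum_prod_type]
  simp only [kroneckerMap_apply, kv, mulVec, dotProduct]
  rw [Finset.sum_mul]
  refine Finset.sum_congr rfl fun c _ => ?_
  rw [Finset.mul_sum]
  exact Finset.sum_congr rfl fun d _ => by ring

lemma star_kv_dot (x y x' y' : n → ℂ) :
    star (kv x y) ⬝ᵥ kv x' y' = (star x ⬝ᵥ x') * (star y ⬝ᵥ y') := by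
  rw [dotProduct, dotProduct, dotProduct, Fintype.sum_prod_type, Finset.sum_mul]
  refine Finset.sum_congr rfl fun c _ => ?_
  rw [Finset.mul_sum]
  refine Finset.sum_congr rfl fun d _ => ?_
  simp [kv, Pi.star_apply]
  ring

lemma vecMulVec_mulVec' (u : n → ℂ) (x : n → ℂ) :
    vecMulVec u (star u) *ᵥ x = (star u ⬝ᵥ x) • u := by
  funext i
  simp only [mulVec, dotProduct, vecMulVec_apply, Pi.smul_apply, smul_eq_mul, Pi.star_apply,
    Finset.sum_mul]
  exact Finset.sum_congr rfl fun j _ => by ring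

lemma kv_smul_left (c : ℂ) (x y : n → ℂ) : kv (c • x) y = c • kv x y := by
  funext p; simp [kv, smul_eq_mul]; ring

lemma kv_smul_right (c : ℂ) (x y : n → ℂ) : kv x (c • y) = c • kv x y := by
  funext p; simp [kv, smul_eq_mul]; ring

lemma posSemidef_vecMulVec_star (u : n → ℂ) : (vecMulVec u (star u)).PosSemidef := by
  refine posSemidef_iff_dotProduct_mulVec.mpr ⟨?_, ?_⟩
  · ext i j; simp [vecMulVec, conjTranspose_apply, mul_comm]
  · intro x
    rw [vecMulVec_mulVec']
    have hx : star x ⬝ᵥ u = star (star u ⬝ᵥ x) := by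
      simp [dotProduct, star_sum, star_mul', mul_comm]
    have : star x ⬝ᵥ (star u ⬝ᵥ x) • u = (star u ⬝ᵥ x) * star (star u ⬝ᵥ x) := by
      rw [dotProduct_smul, smul_eq_mul, hx]
    rw [this]
    exact mul_star_self_nonneg _

lemma kron_conjTranspose (A B : Matrix n n ℂ) : (A ⊗ₖ B)ᴴ = Aᴴ ⊗ₖ Bᴴ := by
  ext p q
  simp [conjTranspose_apply, kroneckerMap_apply, star_mul', mul_comm]

lemma sub_kronecker (A B C : Matrix n n ℂ) : (A - B) ⊗ₖ C = A ⊗ₖ C - B ⊗ₖ C := by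
  ext p q; simp [kroneckerMap_apply, sub_mul]

lemma kronecker_sub (A B C : Matrix n n ℂ) : A ⊗ₖ (B - C) = A ⊗ₖ B - A ⊗ₖ C := by
  ext p q; simp [kroneckerMap_apply, mul_sub]

lemma posSemidef_csmul {m : Type*} [Fintype m] {M : Matrix m m ℂ} (c : ℂ)
    (hc : 0 ≤ c) (hM : M.PosSemidef) : (c • M).PosSemidef := by
  have hcr : star c = c := by
    rw [Complex.star_def, Complex.conj_eq_iff_im]
    exact (Complex.nonneg_iff.mp hc).2.symm ▸ rfl
  refine posSemidef_iff_dotProduct_mulVec.mpr ⟨?_, ?_⟩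
  · show (c • M)ᴴ = c • M
    rw [conjTranspose_smul, hcr, hM.1.eq]
  · intro x
    rw [smul_mulVec, dotProduct_smul, smul_eq_mul]
    exact mul_nonneg hc (hM.dotProduct_mulVec_nonneg x)

lemma vecMulVec_kron (u w : n → ℂ) :
    vecMulVec u (star u) ⊗ₖ vecMulVec w (star w) = vecMulVec (kv u w) (star (kv u w)) := by
  ext p q
  simp [kroneckerMap_apply, vecMulVec_apply, kv, star_mul']
  ring

lemma vecMulVec_mul_vecMulVec' (a b c e : n → ℂ) :
    vecMulVec a b * vecMulVec c e = (b ⬝ᵥ c) • vecMulVec a e := by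
  ext i k
  simp only [mul_apply, vecMulVec_apply, Matrix.smul_apply, dotProduct, smul_eq_mul, Finset.sum_mul]
  exact Finset.sum_congr rfl fun j _ => by ring

lemma swap_mul_vecMulVec_kron (a b : n → ℂ) :
    swap n * (vecMulVec a b ⊗ₖ vecMulVec a b) = vecMulVec a b ⊗ₖ vecMulVec a b := by
  ext p q
  rw [swap_mul_apply]
  simp only [kroneckerMap_apply, vecMulVec_apply]
  ring

lemma omega_aux {n : Type*} [Fintype n] [DecidableEq n] (v w u : n → ℂ)
    (hv : star v ⬝ᵥ v = 1) (hw : star w ⬝ᵥ w = 1) (hu : star u ⬝ᵥ u = 1)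
    (hvw : star v ⬝ᵥ w = 0) (hwv : star w ⬝ᵥ v = 0)
    (hvu : star v ⬝ᵥ u = 0) (huv : star u ⬝ᵥ v = 0)
    (hwu : star w ⬝ᵥ u = 0) (huw : star u ⬝ᵥ w = 0)
    (mu1 mu2 mu5 mu6 : ℝ) (mu3 : ℂ) :
    ((mu1 : ℂ) • ((1 : Matrix n n ℂ) ⊗ₖ vecMulVec v (star v))
        + (mu2 : ℂ) • (vecMulVec v (star v) ⊗ₖ (1 : Matrix n n ℂ))
        + mu3 • (swap n * ((1 : Matrix n n ℂ) ⊗ₖ vecMulVec v (star v)))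
        + (star mu3) • (swap n * (vecMulVec v (star v) ⊗ₖ (1 : Matrix n n ℂ)))
        + (mu5 : ℂ) • (1 : Matrix (n × n) (n × n) ℂ)
        + (mu6 : ℂ) • swap n).PosSemidef
    ↔ ((0 : ℂ) ≤ (mu1 : ℂ) + mu2 + mu3 + star mu3 + mu5 + mu6
        ∧ (!![((mu1 : ℂ) + mu5), (star mu3 + mu6); (mu3 + mu6), ((mu2 : ℂ) + mu5)]).PosSemidef
        ∧ |mu6| ≤ mu5) := by
  set P : Matrix n n ℂ := vecMulVec v (star v) with hPdef
  set S : Matrix (n × n) (n × n) ℂ := swap n with hSdef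
  set Ω : Matrix (n × n) (n × n) ℂ :=
    (mu1 : ℂ) • ((1 : Matrix n n ℂ) ⊗ₖ P) + (mu2 : ℂ) • (P ⊗ₖ (1 : Matrix n n ℂ))
      + mu3 • (S * ((1 : Matrix n n ℂ) ⊗ₖ P)) + (star mu3) • (S * (P ⊗ₖ (1 : Matrix n n ℂ)))
      + (mu5 : ℂ) • (1 : Matrix (n × n) (n × n) ℂ) + (mu6 : ℂ) • S with hΩdef
  constructor
  · intro h
    have hstep : ∀ x y : n → ℂ, Ω *ᵥ kv x y
        = (mu1:ℂ) • ((star v ⬝ᵥ y) • kv x v) + (mu2:ℂ) • ((star v ⬝ᵥ x) • kv v y)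
          + mu3 • ((star v ⬝ᵥ y) • kv v x) + (star mu3) • ((star v ⬝ᵥ x) • kv y v)
          + (mu5:ℂ) • kv x y + (mu6:ℂ) • kv y x := by
      intro x y
      rw [hΩdef, hPdef, hSdef]
      simp only [add_mulVec, smul_mulVec, ← mulVec_mulVec, kron_mulVec_kv,
        one_mulVec, vecMulVec_mulVec', kv_smul_left, kv_smul_right, mulVec_smul, swap_mulVec_kv]
    have ha := h.dotProduct_mulVec_nonneg (kv v v)
    rw [hstep v v] at ha
    simp only [dotProduct_add, dotProduct_smul, star_kv_dot, hv, smul_eq_mul, mul_one,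
      one_mul] at ha
    refine ⟨by convert ha using 1 <;> ring, ?_, ?_⟩
    · refine posSemidef_iff_dotProduct_mulVec.mpr ⟨?_, ?_⟩
      · ext i j
        fin_cases i <;> fin_cases j <;>
          simp [conjTranspose_apply, Complex.star_def, map_add, Complex.conj_ofReal]
      · intro y
        have hb := h.dotProduct_mulVec_nonneg (y 0 • kv w v + y 1 • kv v w)
        rw [mulVec_add, mulVec_smul, mulVec_smul, hstep w v, hstep v w] at hb
        simp only [star_add, star_smul, add_dotProduct, smul_dotProduct, dotProduct_add,
          dotProduct_smul, smul_add, star_kv_dot, hv, hw, hvw, hwv, smul_eq_mul, mul_one,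
          mul_zero, zero_mul, mul_comm, add_zero, zero_add, Pi.star_apply] at hb
        convert hb using 1
        simp [mulVec, dotProduct, Fin.sum_univ_two]
        ring
    · have hc1 := h.dotProduct_mulVec_nonneg (kv w u + kv u w)
      have hc2 := h.dotProduct_mulVec_nonneg (kv w u - kv u w)
      rw [mulVec_add, hstep w u, hstep u w] at hc1
      rw [mulVec_sub, hstep w u, hstep u w] at hc2
      simp only [star_add, star_sub, add_dotProduct, sub_dotProduct, dotProduct_add,
        dotProduct_sub, dotProduct_smul, star_kv_dot, hw, hu, hvw, hvu, hwu, huw, hwv, huv,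
        smul_eq_mul, mul_one, one_mul, mul_zero, zero_mul, add_zero, zero_add, sub_zero,
        zero_sub, smul_zero] at hc1 hc2
      have r1 : (0:ℝ) ≤ mu5 + mu6 := by
        have : (0:ℂ) ≤ ((mu5 + mu6 : ℝ) : ℂ) * 2 := by convert hc1 using 1; push_cast; ring
        have h2 : (0:ℝ) ≤ (mu5 + mu6) * 2 := by exact_mod_cast this
        linarith
      have r2 : (0:ℝ) ≤ mu5 - mu6 := by
        have : (0:ℂ) ≤ ((mu5 - mu6 : ℝ) : ℂ) * 2 := by convert hc2 using 1; push_cast; ring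
        have h2 : (0:ℝ) ≤ (mu5 - mu6) * 2 := by exact_mod_cast this
        linarith
      exact abs_le.mpr ⟨by linarith, by linarith⟩
  · rintro ⟨h1, hM, h6⟩
    -- basic projections
    have hPH : Pᴴ = P := (posSemidef_vecMulVec_star v).1
    have hPP : P * P = P := by
      rw [hPdef, vecMulVec_mul_vecMulVec', hv, one_smul]
    set Q : Matrix n n ℂ := (1 : Matrix n n ℂ) - P with hQdef
    have hQH : Qᴴ = Q := by rw [hQdef, conjTranspose_sub, conjTranspose_one, hPH]
    have hQQm : Q * Q = Q := by
      rw [hQdef]; rw [sub_mul, one_mul, mul_sub, mul_one, hPP]; abel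
    have hPQ : P * Q = 0 := by rw [hQdef, mul_sub, mul_one, hPP, sub_self]
    have hQP : Q * P = 0 := by rw [hQdef, sub_mul, one_mul, hPP, sub_self]
    have hSS : S * S = 1 := swap_mul_swap
    have hSH : Sᴴ = S := swap_conjTranspose
    have hSPP : S * (P ⊗ₖ P) = P ⊗ₖ P := swap_mul_vecMulVec_kron v (star v)
    set K : Matrix (n × n) (n × n) ℂ := Q ⊗ₖ P with hKdef
    set B : Matrix (n × n) (n × n) ℂ := P ⊗ₖ Q with hBdef
    set QQ : Matrix (n × n) (n × n) ℂ := Q ⊗ₖ Q with hQQdef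
    have bSK : S * K = B * S := by rw [hKdef, hBdef, hSdef, swap_mul_kron]
    have bSB : S * B = K * S := by rw [hKdef, hBdef, hSdef, swap_mul_kron]
    have bKK : K * K = K := by
      rw [hKdef, ← mul_kronecker_mul, hQQm, hPP]
    have bKB : K * B = 0 := by
      rw [hKdef, hBdef, ← mul_kronecker_mul, hQP, hPQ]
      exact kroneckerMap_zero_left _ (fun h => (zero_mul h : (0:ℂ) * h = 0)) _
    have bBK : B * K = 0 := by
      rw [hKdef, hBdef, ← mul_kronecker_mul, hPQ, hQP]
      exact kroneckerMap_zero_left _ (fun h => (zero_mul h : (0:ℂ) * h = 0)) _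
    have bBB : B * B = B := by
      rw [hBdef, ← mul_kronecker_mul, hQQm, hPP]
    -- square root of the 2x2 matrix
    set M : Matrix (Fin 2) (Fin 2) ℂ :=
      !![((mu1 : ℂ) + mu5), (star mu3 + mu6); (mu3 + mu6), ((mu2 : ℂ) + mu5)] with hMdef
    obtain ⟨R, hRR, hRH⟩ : ∃ R : Matrix (Fin 2) (Fin 2) ℂ, R * R = M ∧ R.IsHermitian := by
      open scoped MatrixOrder in
      exact ⟨CFC.sqrt M, CFC.sqrt_mul_sqrt_self M (nonneg_iff_posSemidef.mpr hM),
        (nonneg_iff_posSemidef.mp (CFC.sqrt_nonneg M)).1⟩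
    have em00 : R 0 0 * R 0 0 + R 0 1 * R 1 0 = (mu1 : ℂ) + mu5 := by
      simpa [mul_apply, Fin.sum_univ_two, hMdef] using congrFun (congrFun hRR 0) 0
    have em01 : R 0 0 * R 0 1 + R 0 1 * R 1 1 = star mu3 + mu6 := by
      simpa [mul_apply, Fin.sum_univ_two, hMdef] using congrFun (congrFun hRR 0) 1
    have em10 : R 1 0 * R 0 0 + R 1 1 * R 1 0 = mu3 + mu6 := by
      simpa [mul_apply, Fin.sum_univ_two, hMdef] using congrFun (congrFun hRR 1) 0
    have em11 : R 1 0 * R 0 1 + R 1 1 * R 1 1 = (mu2 : ℂ) + mu5 := by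
      simpa [mul_apply, Fin.sum_univ_two, hMdef] using congrFun (congrFun hRR 1) 1
    set Z : Matrix (n × n) (n × n) ℂ :=
      R 0 0 • K + R 0 1 • (K * S) + R 1 0 • (S * K) + R 1 1 • B with hZdef
    have hKH : Kᴴ = K := by rw [hKdef, kron_conjTranspose, hQH, hPH]
    have hBH : Bᴴ = B := by rw [hBdef, kron_conjTranspose, hQH, hPH]
    have hZH : Zᴴ = Z := by
      rw [hZdef]
      simp only [conjTranspose_add, conjTranspose_smul, conjTranspose_mul, hKH, hBH, hSH]
      rw [hRH.apply 0 0, hRH.apply 1 0, hRH.apply 0 1, hRH.apply 1 1]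
      abel
    -- product relations
    have p2 : K * (K * S) = K * S := by rw [← mul_assoc, bKK]
    have p3 : K * (S * K) = 0 := by rw [bSK, ← mul_assoc, bKB, zero_mul]
    have p5 : K * S * K = 0 := by rw [mul_assoc, p3]
    have p6 : K * S * (K * S) = 0 := by rw [← mul_assoc, p5, zero_mul]
    have p7 : K * S * (S * K) = K := by
      rw [mul_assoc, ← mul_assoc S S K, hSS, one_mul, bKK]
    have p8 : K * S * B = K * S := by rw [mul_assoc, bSB, ← mul_assoc, bKK]
    have p9 : S * K * K = S * K := by rw [mul_assoc, bKK]
    have p10 : S * K * (K * S) = B := by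
      rw [mul_assoc, ← mul_assoc K K S, bKK, ← mul_assoc, bSK, mul_assoc, hSS, mul_one]
    have p11 : S * K * (S * K) = 0 := by
      rw [mul_assoc, p3, mul_zero]
    have p12 : S * K * B = 0 := by rw [mul_assoc, bKB, mul_zero]
    have p14 : B * (K * S) = 0 := by rw [← mul_assoc, bBK, zero_mul]
    have p15 : B * (S * K) = S * K := by rw [← mul_assoc, ← bSK, mul_assoc, bKK]
    have hZZ : Z * Z = ((mu1 : ℂ) + mu5) • K + (star mu3 + mu6) • (K * S)
        + (mu3 + (mu6 : ℂ)) • (S * K) + ((mu2 : ℂ) + mu5) • B := by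
      rw [← em00, ← em01, ← em10, ← em11, hZdef]
      simp only [add_mul, mul_add, smul_mul_assoc, mul_smul_comm, smul_smul,
        bKK, bKB, bBK, bBB, p2, p3, p5, p6, p7, p8, p9, p10, p11, p12, p14, p15,
        smul_zero, add_zero, zero_add]
      module
    -- symmetric/antisymmetric parts on Q⊗Q
    have hQQS : QQ * S = S * QQ := (swap_mul_kron Q Q).symm
    have hSQQS : S * (QQ * S) = QQ := by rw [hQQS, ← mul_assoc, hSS, one_mul]
    have hplus : (1 + S) * QQ * (1 + S) = (2:ℂ) • QQ + (2:ℂ) • (S * QQ) := by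
      have hnc : (1 + S) * QQ * (1 + S) = QQ + S * QQ + (QQ * S + S * (QQ * S)) := by
        noncomm_ring
      rw [hnc, hSQQS, hQQS]
      module
    have hminus : (1 - S) * QQ * (1 - S) = (2:ℂ) • QQ - (2:ℂ) • (S * QQ) := by
      have hnc : (1 - S) * QQ * (1 - S) = QQ - S * QQ - QQ * S + S * (QQ * S) := by
        noncomm_ring
      rw [hnc, hSQQS, hQQS]
      module
    -- expansions into atoms
    have eK : K = (1 : Matrix n n ℂ) ⊗ₖ P - P ⊗ₖ P := by
      rw [hKdef, hQdef, sub_kronecker]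
    have eB : B = P ⊗ₖ (1 : Matrix n n ℂ) - P ⊗ₖ P := by
      rw [hBdef, hQdef, kronecker_sub]
    have eQQ : QQ = 1 - P ⊗ₖ (1 : Matrix n n ℂ) - (1 : Matrix n n ℂ) ⊗ₖ P + P ⊗ₖ P := by
      rw [hQQdef, hQdef, sub_kronecker, kronecker_sub, kronecker_sub, one_kronecker_one]
      abel
    have eKS : K * S = S * (P ⊗ₖ (1 : Matrix n n ℂ)) - P ⊗ₖ P := by
      rw [← bSB]; rw [eB]; rw [mul_sub]; rw [hSPP]
    have eSK : S * K = S * ((1 : Matrix n n ℂ) ⊗ₖ P) - P ⊗ₖ P := by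
      rw [eK, mul_sub, hSPP]
    have eSQQ : S * QQ
        = S - S * (P ⊗ₖ (1 : Matrix n n ℂ)) - S * ((1 : Matrix n n ℂ) ⊗ₖ P) + P ⊗ₖ P := by
      rw [eQQ, mul_add, mul_sub, mul_sub, mul_one, hSPP]
    -- the decomposition of Ω into positive semidefinite pieces
    have key : Ω = ((mu1:ℂ) + mu2 + mu3 + star mu3 + mu5 + mu6) • (P ⊗ₖ P) + Z * Z
        + (((mu5:ℂ) + mu6)/4) • ((1 + S) * QQ * (1 + S))
        + (((mu5:ℂ) - mu6)/4) • ((1 - S) * QQ * (1 - S)) := by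
      rw [hZZ, hplus, hminus, eSQQ, eQQ, eKS, eSK, eK, eB, hΩdef]
      module
    have PSD1 : (((mu1:ℂ) + mu2 + mu3 + star mu3 + mu5 + mu6) • (P ⊗ₖ P)).PosSemidef := by
      refine posSemidef_csmul _ h1 ?_
      rw [hPdef, vecMulVec_kron]
      exact posSemidef_vecMulVec_star _
    have PSD2 : (Z * Z).PosSemidef := by
      have := posSemidef_conjTranspose_mul_self Z
      rwa [hZH] at this
    have hQQPSD : QQ.PosSemidef := by
      have hQQH : QQᴴ = QQ := by rw [hQQdef, kron_conjTranspose, hQH]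
      have hQQi : QQ * QQ = QQ := by rw [hQQdef, ← mul_kronecker_mul, hQQm]
      have := posSemidef_conjTranspose_mul_self QQ
      rwa [hQQH, hQQi] at this
    have habs := abs_le.mp h6
    have PSD3 : ((((mu5:ℂ) + mu6)/4) • ((1 + S) * QQ * (1 + S))).PosSemidef := by
      refine posSemidef_csmul _ ?_ ?_
      · have hc : ((mu5:ℂ) + mu6)/4 = (((mu5 + mu6)/4 : ℝ) : ℂ) := by push_cast; ring
        rw [hc]
        exact Complex.zero_le_real.mpr (by linarith [habs.1, habs.2])
      · have h1S : (1 + S)ᴴ = 1 + S := by rw [conjTranspose_add, conjTranspose_one, hSH]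
        have := hQQPSD.mul_mul_conjTranspose_same (1 + S)
        rwa [h1S] at this
    have PSD4 : ((((mu5:ℂ) - mu6)/4) • ((1 - S) * QQ * (1 - S))).PosSemidef := by
      refine posSemidef_csmul _ ?_ ?_
      · have hc : ((mu5:ℂ) - mu6)/4 = (((mu5 - mu6)/4 : ℝ) : ℂ) := by push_cast; ring
        rw [hc]
        exact Complex.zero_le_real.mpr (by linarith [habs.1, habs.2])
      · have h1S : (1 - S)ᴴ = 1 - S := by rw [conjTranspose_sub, conjTranspose_one, hSH]
        have := hQQPSD.mul_mul_conjTranspose_same (1 - S)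
        rwa [h1S] at this
    rw [key]
    exact ((PSD1.add PSD2).add PSD3).add PSD4

/-- Positivity criterion for
`Ω = μ₁ I⊗e₁e₁* + μ₂ e₁e₁*⊗I + μ₃ S(I⊗e₁e₁*) + μ₄ S(e₁e₁*⊗I) + μ₅ I⊗I + μ₆ S`
when `d ≥ 3`. -/
theorem Omega_posSemidef_iff {d : ℕ} (hd : 3 ≤ d)
    (e : Fin d → EuclideanSpace ℂ (Fin d)) (he : Orthonormal ℂ e)
    (mu1 mu2 mu5 mu6 : ℝ) (mu3 : ℂ) :
    ((mu1 : ℂ) • ((1 : Matrix (Fin d) (Fin d) ℂ) ⊗ₖ vecMulVec (e ⟨0, by omega⟩) (star (e ⟨0, by omega⟩)))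
        + (mu2 : ℂ) • (vecMulVec (e ⟨0, by omega⟩) (star (e ⟨0, by omega⟩)) ⊗ₖ (1 : Matrix (Fin d) (Fin d) ℂ))
        + mu3 • (swap (Fin d) * ((1 : Matrix (Fin d) (Fin d) ℂ) ⊗ₖ vecMulVec (e ⟨0, by omega⟩) (star (e ⟨0, by omega⟩))))
        + (star mu3) • (swap (Fin d) * (vecMulVec (e ⟨0, by omega⟩) (star (e ⟨0, by omega⟩)) ⊗ₖ (1 : Matrix (Fin d) (Fin d) ℂ)))
        + (mu5 : ℂ) • (1 : Matrix (Fin d × Fin d) (Fin d × Fin d) ℂ)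
        + (mu6 : ℂ) • swap (Fin d)).PosSemidef
    ↔ ((0 : ℂ) ≤ (mu1 : ℂ) + mu2 + mu3 + star mu3 + mu5 + mu6
        ∧ (!![((mu1 : ℂ) + mu5), (star mu3 + mu6); (mu3 + mu6), ((mu2 : ℂ) + mu5)]).PosSemidef
        ∧ |mu6| ≤ mu5) := by
  have key : ∀ i j : Fin d, star (e i) ⬝ᵥ (e j : Fin d → ℂ) = if i = j then (1:ℂ) else 0 := by
    intro i j
    have h := orthonormal_iff_ite.mp he i j
    rw [EuclideanSpace.inner_eq_star_dotProduct] at h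
    rwa [dotProduct_comm] at h
  exact omega_aux (e ⟨0, by omega⟩) (e ⟨1, by omega⟩) (e ⟨2, by omega⟩)
    (by simpa using key ⟨0, by omega⟩ ⟨0, by omega⟩)
    (by simpa using key ⟨1, by omega⟩ ⟨1, by omega⟩)
    (by simpa using key ⟨2, by omega⟩ ⟨2, by omega⟩)
    (by simpa [Fin.ext_iff] using key ⟨0, by omega⟩ ⟨1, by omega⟩)
    (by simpa [Fin.ext_iff] using key ⟨1, by omega⟩ ⟨0, by omega⟩)
    (by simpa [Fin.ext_iff] using key ⟨0, by omega⟩ ⟨2, by omega⟩)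
    (by simpa [Fin.ext_iff] using key ⟨2, by omega⟩ ⟨0, by omega⟩)
    (by simpa [Fin.ext_iff] using key ⟨1, by omega⟩ ⟨2, by omega⟩)
    (by simpa [Fin.ext_iff] using key ⟨2, by omega⟩ ⟨1, by omega⟩)
    mu1 mu2 mu5 mu6 mu3
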